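/- arXiv:2108.02202 — 3 statements merged into one kernel-verified Lean document; each statement's English description precedes it below -/
import Mathlib

section
/- Let K_ℓ, K_r, G : ℝ → ℝ be differentiable on (0,∞). Suppose that for all u, v > 0 both conservation identities hold: (∂/∂v)[K_ℓ(uv)/u²] + (∂/∂u)[G(uv)/(u·v)] = 0 and (∂/∂u)[K_r(uv)/v²] + (∂/∂v)[G(uv)/(u·v)] = 0. Then the function K_ℓ − K_r is constant on (0,∞). -/
/-!
Evaluate both conservation identities at `v = 1` and write `H(s) = G(s)/s`: the first reads
`K_ℓ'(s)/s + H'(s) = 0` and the second `K_r'(s) + s H'(s) = 0`. Hence `K_ℓ' = K_r'` on `(0,∞)`,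
and `K_ℓ - K_r` is constant on this connected open set.
-/

open Set

lemma deriv_comp_mul_left_one (f : ℝ → ℝ) (s : ℝ) :
    deriv (fun v => f (s * v)) 1 = s * deriv f s := by
  simpa using deriv_comp_mul_left s f 1

lemma deriv_eq_of_conservation_left {Kl G : ℝ → ℝ} {s : ℝ} (hs : s ≠ 0)
    (h : deriv (fun v' : ℝ => Kl (s * v') / s ^ 2) 1
      + deriv (fun u' : ℝ => G (u' * 1) / (u' * 1)) s = 0) :
    deriv Kl s = -s * deriv (fun u => G u / u) s := by
  simp only [deriv_div_const, deriv_comp_mul_left_one, mul_one] at h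
  field_simp at h
  linear_combination h

lemma deriv_eq_of_conservation_right {Kr G : ℝ → ℝ} {s : ℝ}
    (h : deriv (fun u' : ℝ => Kr (u' * 1) / 1 ^ 2) s
      + deriv (fun v' : ℝ => G (s * v') / (s * v')) 1 = 0) :
    deriv Kr s = -s * deriv (fun u => G u / u) s := by
  have hG : deriv (fun v' : ℝ => G (s * v') / (s * v')) 1 = s * deriv (fun u => G u / u) s :=
    deriv_comp_mul_left_one (fun u => G u / u) s
  simp only [mul_one, one_pow, div_one, hG] at h
  linear_combination h

theorem tHooft_anomaly_coefficient_is_RG_invariant_general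
    (Kl Kr G : ℝ → ℝ)
    (hKl : ∀ s : ℝ, 0 < s → DifferentiableAt ℝ Kl s)
    (hKr : ∀ s : ℝ, 0 < s → DifferentiableAt ℝ Kr s)
    (hconsL : ∀ u v : ℝ, 0 < u → 0 < v →
        deriv (fun v' : ℝ => Kl (u * v') / u ^ 2) v
          + deriv (fun u' : ℝ => G (u' * v) / (u' * v)) u = 0)
    (hconsR : ∀ u v : ℝ, 0 < u → 0 < v →
        deriv (fun u' : ℝ => Kr (u' * v) / v ^ 2) u
          + deriv (fun v' : ℝ => G (u * v') / (u * v')) v = 0) :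
    ∃ c : ℝ, ∀ s : ℝ, 0 < s → Kl s - Kr s = c := by
  have hderiv : EqOn (deriv Kl) (deriv Kr) (Ioi 0) := fun s (hs : 0 < s) => by
    rw [deriv_eq_of_conservation_left hs.ne' (hconsL s 1 hs one_pos),
      deriv_eq_of_conservation_right (hconsR s 1 hs one_pos)]
  obtain ⟨c, hc⟩ := isOpen_Ioi.exists_eq_add_of_deriv_eq isPreconnected_Ioi
    (fun s hs => (hKl s hs).differentiableWithinAt)
    (fun s hs => (hKr s hs).differentiableWithinAt) hderiv
  exact ⟨c, fun s hs => by rw [hc hs]; ring⟩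

/-- The 't Hooft anomaly coefficient `K_ℓ − K_r` of a conserved `U(1)` current is a
renormalization group invariant: with two-point functions `⟨J₊J₊⟩ = K_ℓ(uv)/u²`,
`⟨J₋J₋⟩ = K_r(uv)/v²`, `⟨J₊J₋⟩ = G(uv)/(uv)`, the two conservation identities imply
that `K_ℓ − K_r` is constant on `(0,∞)`. -/
theorem tHooft_anomaly_coefficient_is_RG_invariant
    (Kl Kr G : ℝ → ℝ)
    (hKl : ∀ s : ℝ, 0 < s → DifferentiableAt ℝ Kl s)
    (hKr : ∀ s : ℝ, 0 < s → DifferentiableAt ℝ Kr s)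
    (hG : ∀ s : ℝ, 0 < s → DifferentiableAt ℝ G s)
    (hconsL : ∀ u v : ℝ, 0 < u → 0 < v →
        deriv (fun v' : ℝ => Kl (u * v') / u ^ 2) v
          + deriv (fun u' : ℝ => G (u' * v) / (u' * v)) u = 0)
    (hconsR : ∀ u v : ℝ, 0 < u → 0 < v →
        deriv (fun u' : ℝ => Kr (u' * v) / v ^ 2) u
          + deriv (fun v' : ℝ => G (u * v') / (u * v')) v = 0) :
    ∃ c : ℝ, ∀ s : ℝ, 0 < s → Kl s - Kr s = c :=
  tHooft_anomaly_coefficient_is_RG_invariant_general Kl Kr G hKl hKr hconsL hconsR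
end

section
/- Let ĝ be a finite-dimensional real Lie algebra with a symmetric bilinear form B that is ad-invariant, i.e., B([x,y],z) = B(x,[y,z]) for all x,y,z. Suppose ĝ = g ⊕ p is a direct sum decomposition with B(g,p) = 0, [g,g] ⊆ g, [g,p] ⊆ p, and [p,p] ⊆ g (a symmetric pair). Let {g_a}_{a=1..D} be a basis of g orthonormal for B and {p_i}_{i=1..n} a basis of p orthonormal for B, and define t^a_{ij} := B([g_a, p_i], p_j). Then for all indices i,j,k,l: Σ_{a=1}^{D} ( t^a_{ij} t^a_{kl} + t^a_{ik} t^a_{lj} + t^a_{il} t^a_{jk} ) = 0. -/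
/-- Symmetric pairs satisfy the Bianchi identity: if `ĝ = g ⊕ p` with an
ad-invariant symmetric bilinear form `B` orthogonal on `g × p`, brackets
`[g,g] ⊆ g`, `[g,p] ⊆ p`, `[p,p] ⊆ g`, and `B`-orthonormal bases `{g_a}` of `g`
and `{p_i}` of `p`, then the matrices `t^a_{ij} = B([g_a,p_i],p_j)` satisfy
`Σ_a (t^a_{ij} t^a_{kl} + t^a_{ik} t^a_{lj} + t^a_{il} t^a_{jk}) = 0`. -/
theorem symmetric_pair_bianchi_identity
    (gh : Type*) [LieRing gh] [LieAlgebra ℝ gh] [FiniteDimensional ℝ gh]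
    (B : LinearMap.BilinForm ℝ gh)
    (hsymm : ∀ x y : gh, B x y = B y x)
    (hinv : ∀ x y z : gh, B ⁅x, y⁆ z = B x ⁅y, z⁆)
    (g p : Submodule ℝ gh) (hcompl : IsCompl g p)
    (horth : ∀ x ∈ g, ∀ y ∈ p, B x y = 0)
    (hgg : ∀ x ∈ g, ∀ y ∈ g, ⁅x, y⁆ ∈ g)
    (hgp : ∀ x ∈ g, ∀ y ∈ p, ⁅x, y⁆ ∈ p)
    (hpp : ∀ x ∈ p, ∀ y ∈ p, ⁅x, y⁆ ∈ g)
    (D n : ℕ) (ga : Fin D → gh) (pv : Fin n → gh)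
    (hgam : ∀ a, ga a ∈ g) (hpvm : ∀ i, pv i ∈ p)
    (hgaind : LinearIndependent ℝ ga)
    (hgaspan : Submodule.span ℝ (Set.range ga) = g)
    (hpvind : LinearIndependent ℝ pv)
    (hpvspan : Submodule.span ℝ (Set.range pv) = p)
    (hgaon : ∀ a b, B (ga a) (ga b) = if a = b then 1 else 0)
    (hpvon : ∀ i j, B (pv i) (pv j) = if i = j then 1 else 0) :
    ∀ i j k l : Fin n,
      ∑ a : Fin D,
        (B ⁅ga a, pv i⁆ (pv j) * B ⁅ga a, pv k⁆ (pv l)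
          + B ⁅ga a, pv i⁆ (pv k) * B ⁅ga a, pv l⁆ (pv j)
          + B ⁅ga a, pv i⁆ (pv l) * B ⁅ga a, pv j⁆ (pv k)) = 0 := by
  -- key: for u, v ∈ g, ∑ a, B (ga a) u * B (ga a) v = B u v
  have key : ∀ u v : gh, u ∈ g → v ∈ g →
      (∑ a : Fin D, B (ga a) u * B (ga a) v) = B u v := by
    intro u v hu hv
    rw [← hgaspan] at hv
    obtain ⟨c, hc⟩ := (Submodule.mem_span_range_iff_exists_fun ℝ).mp hv
    have h1 : ∀ a, B (ga a) v = c a := by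
      intro a
      rw [← hc, map_sum]
      have : ∀ b, B (ga a) (c b • ga b) = c b * (if a = b then 1 else 0) := by
        intro b; rw [map_smul, hgaon]; simp [mul_comm]
      simp_rw [this]
      simp
    have h2 : B u v = ∑ a : Fin D, c a * B (ga a) u := by
      rw [← hc, map_sum]
      congr 1; ext a
      rw [map_smul, hsymm u (ga a)]
      simp [mul_comm]
    rw [h2]
    congr 1; ext a
    rw [h1 a]; ring
  intro i j k l
  have hb : ∀ x y : gh, B ⁅x, y⁆ = B x ∘ₗ (LieAlgebra.ad ℝ gh y) ∨ True := by tauto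
  -- rewrite each product sum as B ⁅pv ·,pv ·⁆ ⁅pv ·,pv ·⁆
  have step : ∀ i' j' k' l' : Fin n,
      (∑ a : Fin D, B ⁅ga a, pv i'⁆ (pv j') * B ⁅ga a, pv k'⁆ (pv l'))
        = B (pv i') ⁅pv j', ⁅pv k', pv l'⁆⁆ := by
    intro i' j' k' l'
    have e : ∀ (a : Fin D) (i j : Fin n), B ⁅ga a, pv i⁆ (pv j) = B (ga a) ⁅pv i, pv j⁆ := by
      intro a i j; rw [hinv]
    simp_rw [e]
    rw [key _ _ (hpp _ (hpvm i') _ (hpvm j')) (hpp _ (hpvm k') _ (hpvm l'))]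
    rw [hinv]
  rw [Finset.sum_add_distrib, Finset.sum_add_distrib, step, step, step]
  have jac := lie_jacobi (pv j) (pv k) (pv l)
  have : B (pv i) ⁅pv j, ⁅pv k, pv l⁆⁆ + B (pv i) ⁅pv k, ⁅pv l, pv j⁆⁆
      + B (pv i) ⁅pv l, ⁅pv j, pv k⁆⁆
      = B (pv i) (⁅pv j, ⁅pv k, pv l⁆⁆ + ⁅pv k, ⁅pv l, pv j⁆⁆ + ⁅pv l, ⁅pv j, pv k⁆⁆) := by
    simp [map_add]
  rw [this]
  have jac' : ⁅pv j, ⁅pv k, pv l⁆⁆ + ⁅pv k, ⁅pv l, pv j⁆⁆ + ⁅pv l, ⁅pv j, pv k⁆⁆ = 0 := by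
    have := lie_jacobi (pv j) (pv k) (pv l)
    linear_combination (norm := abel) this
  rw [jac']; simp
end

section
/- Let g be a finite-dimensional real Lie algebra with basis {x_a}_{a=1..D} whose structure constants f, defined by [x_a, x_b] = Σ_c f_{abc} x_c, are totally antisymmetric in all three indices. Let t¹,…,t^D be real skew-symmetric n×n matrices forming a representation of g, i.e., [t^a, t^b] = Σ_c f_{abc} t^c, and suppose they satisfy the Bianchi identity Σ_a ( t^a_{ij} t^a_{kl} + t^a_{ik} t^a_{lj} + t^a_{il} t^a_{jk} ) = 0 for all i,j,k,l. Then the bracket on ĝ := g ⊕ ℝⁿ defined bilinearly by [(x,0),(y,0)] := ([x,y],0), [(x_a,0),(0,u)] := (0, t^a u), [(0,u),(x_a,0)] := (0, −t^a u), and [(0,u),(0,v)] := (Σ_a (uᵀ t^a v)·x_a, 0) is antisymmetric and satisfies the Jacobi identity, so it makes ĝ a Lie algebra containing g with [p,p] ⊆ g where p = ℝⁿ. -/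
open Matrix

/-!
Write `μ(u, v) = Σ_a (uᵀ tᵃ v) x_a`, so that the bracket is
`[(x, u), (y, v)] = ([x, y] + μ(u, v), x·v - y·u)`, the ℤ/2-graded extension of `g` by the
representation `V = ℝⁿ`. For any Lie module `V` and bilinear `μ : V × V → g` this bracket is
antisymmetric as soon as `μ` is; the `g`-component of its Jacobiator vanishes by the Jacobi
identity of `g` once `μ` is moreover `g`-equivariant, and its `V`-component is, up to sign, the cyclic sum
`μ(v, w)·u + μ(w, u)·v + μ(u, v)·w`, which is what the Bianchi identity kills.
For the matrix data, `μ` is skew because the `tᵃ` are, and it is equivariant because the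
antisymmetry of `f` in its last two indices turns the representation property into
`Σ_a f_{cae} tᵃ = [tᵉ, tᶜ]`.
-/

section SymmetricPair

variable {R L V : Type*} [CommRing R] [LieRing L] [LieAlgebra R L]
  [AddCommGroup V] [Module R V] [LieRingModule L V]

def symmetricPairBracket (μ : V →ₗ[R] V →ₗ[R] L) (P Q : L × V) : L × V :=
  (⁅P.1, Q.1⁆ + μ P.2 Q.2, ⁅P.1, Q.2⁆ - ⁅Q.1, P.2⁆)

variable {μ : V →ₗ[R] V →ₗ[R] L}

theorem symmetricPairBracket_swap (hμ : ∀ u v, μ u v = -μ v u) (P Q : L × V) :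
    symmetricPairBracket μ P Q = -symmetricPairBracket μ Q P := by
  ext
  · simp only [symmetricPairBracket, Prod.fst_neg, neg_add, ← lie_skew P.1, ← hμ]
  · simp only [symmetricPairBracket, Prod.snd_neg, neg_sub]

theorem symmetricPairBracket_jacobi_fst (hμ : ∀ u v, μ u v = -μ v u)
    (hequiv : ∀ (x : L) u v, ⁅x, μ u v⁆ = μ ⁅x, u⁆ v + μ u ⁅x, v⁆) (P Q S : L × V) :
    (symmetricPairBracket μ P (symmetricPairBracket μ Q S) +
      symmetricPairBracket μ Q (symmetricPairBracket μ S P) +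
      symmetricPairBracket μ S (symmetricPairBracket μ P Q)).1 = 0 := by
  obtain ⟨x, u⟩ := P
  obtain ⟨y, v⟩ := Q
  obtain ⟨z, w⟩ := S
  simp only [symmetricPairBracket, Prod.fst_add, lie_add, map_sub, hequiv]
  rw [hμ ⁅x, v⁆ w, hμ ⁅y, w⁆ u, hμ ⁅z, u⁆ v, ← lie_jacobi x y z]
  abel

theorem symmetricPairBracket_jacobi_snd
    (hcyclic : ∀ u v w, ⁅μ v w, u⁆ + ⁅μ w u, v⁆ + ⁅μ u v, w⁆ = 0) (P Q S : L × V) :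
    (symmetricPairBracket μ P (symmetricPairBracket μ Q S) +
      symmetricPairBracket μ Q (symmetricPairBracket μ S P) +
      symmetricPairBracket μ S (symmetricPairBracket μ P Q)).2 = 0 := by
  obtain ⟨x, u⟩ := P
  obtain ⟨y, v⟩ := Q
  obtain ⟨z, w⟩ := S
  simp only [symmetricPairBracket, Prod.snd_add, lie_sub, add_lie, lie_lie]
  rw [← neg_eq_zero, ← hcyclic u v w]
  abel

end SymmetricPair

namespace Module.Basis

variable {R L L' ι : Type*} [CommRing R] [LieRing L] [LieAlgebra R L] [LieRing L']
  [LieAlgebra R L'] [Fintype ι]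

noncomputable def constrLieHom (b : Basis ι R L) (f : ι → ι → ι → R) (t : ι → L')
    (hb : ∀ i j, ⁅b i, b j⁆ = ∑ k, f i j k • b k) (ht : ∀ i j, ⁅t i, t j⁆ = ∑ k, f i j k • t k) :
    L →ₗ⁅R⁆ L' :=
  { b.constr R t with
    map_lie' := fun {x y} => by
      have h : (LieAlgebra.ad R L : L →ₗ[R] Module.End R L).compr₂ (b.constr R t) =
          (LieAlgebra.ad R L' : L' →ₗ[R] Module.End R L').compl₁₂ (b.constr R t) (b.constr R t) :=
        LinearMap.ext_basis b b fun i j => by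
          simp only [LinearMap.compr₂_apply, LinearMap.compl₁₂_apply, LieHom.coe_toLinearMap,
            LieAlgebra.ad_apply, hb, ht, map_sum, map_smul, constr_basis]
      exact LinearMap.congr_fun₂ h x y }

end Module.Basis

section MatrixRepresentation

attribute [local instance] LieRing.ofAssociativeRing

variable {R g ι m : Type*} [CommRing R] [LieRing g] [LieAlgebra R g] [Fintype ι] [Fintype m]
  [DecidableEq m]

@[reducible] noncomputable def Module.Basis.matrixLieRingModule (b : Module.Basis ι R g)
    (f : ι → ι → ι → R) (t : ι → Matrix m m R) (hb : ∀ i j, ⁅b i, b j⁆ = ∑ k, f i j k • b k)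
    (ht : ∀ i j, t i * t j - t j * t i = ∑ k, f i j k • t k) : LieRingModule g (m → R) :=
  LieRingModule.compLieHom (m → R) (lieEquivMatrix'.symm.toLieHom.comp
    (b.constrLieHom f t hb fun i j => (LieRing.of_associative_ring_bracket _ _).trans (ht i j)))

theorem Module.Basis.matrixLieRingModule_lie (b : Module.Basis ι R g)
    (f : ι → ι → ι → R) (t : ι → Matrix m m R) (hb : ∀ i j, ⁅b i, b j⁆ = ∑ k, f i j k • b k)
    (ht : ∀ i j, t i * t j - t j * t i = ∑ k, f i j k • t k) (x : g) (v : m → R) :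
    letI := b.matrixLieRingModule f t hb ht
    ⁅x, v⁆ = b.constr R t x *ᵥ v :=
  rfl

end MatrixRepresentation

theorem Finset.sum_sum_sum_rotate {α β γ M : Type*} [Fintype α] [Fintype β] [Fintype γ]
    [AddCommMonoid M] (F : α → β → γ → M) :
    ∑ i, ∑ j, ∑ k, F i j k = ∑ j, ∑ k, ∑ i, F i j k := by
  rw [Finset.sum_comm]
  exact Finset.sum_congr rfl fun _ _ => Finset.sum_comm

section MatrixIdentities

variable {R ι m : Type*} [CommRing R] [Fintype ι] [Fintype m]

theorem dotProduct_mulVec_eq_neg_of_transpose_eq_neg {A : Matrix m m R} (hA : Aᵀ = -A)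
    (p q : m → R) : p ⬝ᵥ A *ᵥ q = -(q ⬝ᵥ A *ᵥ p) := by
  rw [dotProduct_mulVec, ← mulVec_transpose, hA, neg_mulVec, neg_dotProduct, dotProduct_comm]

theorem dotProduct_mulVec_mul_mulVec_apply (A B : Matrix m m R) (u v w : m → R) (i : m) :
    (v ⬝ᵥ A *ᵥ w) * (B *ᵥ u) i = ∑ j, ∑ k, ∑ l, B i j * A k l * (u j * v k * w l) := by
  simp only [mulVec, dotProduct, Finset.sum_mul, Finset.mul_sum]
  refine Finset.sum_congr rfl fun j _ => Finset.sum_congr rfl fun k _ =>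
    Finset.sum_congr rfl fun l _ => by ring

theorem sum_smul_mulVec_apply (t : ι → Matrix m m R) (u v w : m → R) (i : m) :
    (∑ a, (v ⬝ᵥ t a *ᵥ w) • t a *ᵥ u) i =
      ∑ j, ∑ k, ∑ l, (∑ a, t a i j * t a k l) * (u j * v k * w l) := by
  simp only [Finset.sum_apply, Pi.smul_apply, smul_eq_mul, dotProduct_mulVec_mul_mulVec_apply,
    Finset.sum_mul]
  rw [Finset.sum_comm]
  refine Finset.sum_congr rfl fun j _ => ?_
  rw [Finset.sum_comm]
  exact Finset.sum_congr rfl fun k _ => Finset.sum_comm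

theorem sum_smul_mulVec_cyclic_eq_zero (t : ι → Matrix m m R)
    (hbianchi : ∀ i j k l, ∑ a, (t a i j * t a k l + t a i k * t a l j + t a i l * t a j k) = 0)
    (u v w : m → R) :
    ∑ a, (v ⬝ᵥ t a *ᵥ w) • t a *ᵥ u + ∑ a, (w ⬝ᵥ t a *ᵥ u) • t a *ᵥ v +
      ∑ a, (u ⬝ᵥ t a *ᵥ v) • t a *ᵥ w = 0 := by
  ext i
  simp only [Pi.add_apply, sum_smul_mulVec_apply, Pi.zero_apply]
  rw [← Finset.sum_sum_sum_rotate fun l j k => (∑ a, t a i j * t a k l) * (v j * w k * u l),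
    Finset.sum_sum_sum_rotate fun j k l => (∑ a, t a i j * t a k l) * (w j * u k * v l)]
  simp only [← Finset.sum_add_distrib]
  refine Finset.sum_eq_zero fun j _ => Finset.sum_eq_zero fun k _ => Finset.sum_eq_zero fun l _ => ?_
  have h := hbianchi i j k l
  simp only [Finset.sum_add_distrib] at h
  linear_combination (u j * v k * w l) * h

end MatrixIdentities

section MomentMap

variable {R g ι m : Type*} [CommRing R] [LieRing g] [LieAlgebra R g] [Fintype ι] [Fintype m]
  [DecidableEq m]

variable (e : ι → g) (t : ι → Matrix m m R)

noncomputable def momentMap : (m → R) →ₗ[R] (m → R) →ₗ[R] g :=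
  ∑ a, (Matrix.toLinearMap₂' R (t a)).compr₂ (LinearMap.toSpanSingleton R g (e a))

theorem momentMap_apply (p q : m → R) : momentMap e t p q = ∑ a, (p ⬝ᵥ t a *ᵥ q) • e a := by
  simp [momentMap, Matrix.toLinearMap₂'_apply']

variable {e t}

theorem momentMap_swap (hskew : ∀ a, (t a)ᵀ = -t a) (p q : m → R) :
    momentMap e t p q = -momentMap e t q p := by
  simp only [momentMap_apply, dotProduct_mulVec_eq_neg_of_transpose_eq_neg (hskew _) p q,
    neg_smul, Finset.sum_neg_distrib]

theorem constr_momentMap (b : Module.Basis ι R g) (p q : m → R) :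
    b.constr R t (momentMap b t p q) = ∑ a, (p ⬝ᵥ t a *ᵥ q) • t a := by
  simp only [momentMap_apply, map_sum, map_smul, Module.Basis.constr_basis]

variable {f : ι → ι → ι → R}

omit [DecidableEq m] in
theorem sum_structureConst_smul (hf : ∀ a c e, f a c e = -f a e c)
    (hrep : ∀ a c, t a * t c - t c * t a = ∑ e, f a c e • t e) (c e : ι) :
    ∑ a, f c a e • t a = t e * t c - t c * t e := by
  simp only [hf c _ e, neg_smul, Finset.sum_neg_distrib, ← hrep, neg_sub]

theorem lie_basis_momentMap (b : Module.Basis ι R g) (hskew : ∀ a, (t a)ᵀ = -t a)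
    (hf : ∀ a c e, f a c e = -f a e c) (hstruct : ∀ a c, ⁅b a, b c⁆ = ∑ e, f a c e • b e)
    (hrep : ∀ a c, t a * t c - t c * t a = ∑ e, f a c e • t e) (c : ι) (p q : m → R) :
    ⁅b c, momentMap b t p q⁆ = momentMap b t (t c *ᵥ p) q + momentMap b t p (t c *ᵥ q) := by
  have hcoeff : ∀ e, ∑ a, (p ⬝ᵥ t a *ᵥ q) * f c a e =
      (t c *ᵥ p) ⬝ᵥ t e *ᵥ q + p ⬝ᵥ t e *ᵥ (t c *ᵥ q) := by
    intro e
    have hc := dotProduct_mulVec_eq_neg_of_transpose_eq_neg (hskew c) p (t e *ᵥ q)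
    rw [dotProduct_comm (t e *ᵥ q)] at hc
    calc ∑ a, (p ⬝ᵥ t a *ᵥ q) * f c a e = p ⬝ᵥ (∑ a, f c a e • t a) *ᵥ q := by
          simp only [sum_mulVec, dotProduct_sum, smul_mulVec, dotProduct_smul, smul_eq_mul,
            mul_comm]
      _ = _ := by
        rw [sum_structureConst_smul hf hrep, sub_mulVec, dotProduct_sub, ← mulVec_mulVec,
          ← mulVec_mulVec, hc]
        ring
  simp only [momentMap_apply, lie_sum, lie_smul, hstruct, Finset.smul_sum, smul_smul]
  rw [Finset.sum_comm, ← Finset.sum_add_distrib]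
  refine Finset.sum_congr rfl fun e _ => ?_
  rw [← Finset.sum_smul, hcoeff, add_smul]

theorem lie_momentMap (b : Module.Basis ι R g) (hskew : ∀ a, (t a)ᵀ = -t a)
    (hf : ∀ a c e, f a c e = -f a e c) (hstruct : ∀ a c, ⁅b a, b c⁆ = ∑ e, f a c e • b e)
    (hrep : ∀ a c, t a * t c - t c * t a = ∑ e, f a c e • t e) (x : g) (p q : m → R) :
    ⁅x, momentMap b t p q⁆ =
      momentMap b t (b.constr R t x *ᵥ p) q + momentMap b t p (b.constr R t x *ᵥ q) := by
  conv_lhs => rw [← b.sum_repr x]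
  simp only [b.constr_apply_fintype R t x, sum_lie, smul_lie,
    lie_basis_momentMap b hskew hf hstruct hrep, sum_mulVec, smul_mulVec, map_sum, map_smul,
    LinearMap.sum_apply, LinearMap.smul_apply, smul_add, Finset.sum_add_distrib,
    Module.Basis.equivFun_apply]

end MomentMap

theorem bianchi_identity_gives_symmetric_pair_general
    (g : Type*) [LieRing g] [LieAlgebra ℝ g]
    (D n : ℕ) (b : Module.Basis (Fin D) ℝ g)
    (f : Fin D → Fin D → Fin D → ℝ)
    (hf2 : ∀ a c e, f a c e = -f a e c)
    (hstruct : ∀ a c, ⁅b a, b c⁆ = ∑ e, f a c e • b e)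
    (t : Fin D → Matrix (Fin n) (Fin n) ℝ)
    (hskew : ∀ a, (t a)ᵀ = -t a)
    (hrep : ∀ a c, t a * t c - t c * t a = ∑ e, f a c e • t e)
    (hbianchi : ∀ i j k l, ∑ a,
        (t a i j * t a k l + t a i k * t a l j + t a i l * t a j k) = 0) :
    let br : (g × (Fin n → ℝ)) → (g × (Fin n → ℝ)) → (g × (Fin n → ℝ)) :=
      fun P Q =>
        (⁅P.1, Q.1⁆ + ∑ a, (P.2 ⬝ᵥ (t a).mulVec Q.2) • b a,
          (∑ a, b.repr P.1 a • t a).mulVec Q.2 - (∑ a, b.repr Q.1 a • t a).mulVec P.2)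
    (∀ P Q, br P Q = -br Q P) ∧
    (∀ P Q R, br P (br Q R) + br Q (br R P) + br R (br P Q) = 0) ∧
    (∀ y z : g, br (y, 0) (z, 0) = (⁅y, z⁆, 0)) ∧
    (∀ u v : Fin n → ℝ, (br (0, u) (0, v)).2 = 0) := by
  intro br
  let _ := b.matrixLieRingModule f t hstruct hrep
  have hbr : br = symmetricPairBracket (momentMap b t) := by
    funext P Q
    simp [br, symmetricPairBracket, momentMap_apply, b.matrixLieRingModule_lie,
      b.constr_apply_fintype ℝ t]
  have hequiv : ∀ (x : g) u v,
      ⁅x, momentMap b t u v⁆ = momentMap b t ⁅x, u⁆ v + momentMap b t u ⁅x, v⁆ :=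
    lie_momentMap b hskew hf2 hstruct hrep
  have hcyclic : ∀ u v w : Fin n → ℝ,
      ⁅momentMap b t v w, u⁆ + ⁅momentMap b t w u, v⁆ + ⁅momentMap b t u v, w⁆ = 0 := by
    intro u v w
    simp only [b.matrixLieRingModule_lie, constr_momentMap, sum_mulVec, smul_mulVec]
    exact sum_smul_mulVec_cyclic_eq_zero t hbianchi u v w
  rw [hbr]
  refine ⟨symmetricPairBracket_swap (momentMap_swap hskew), fun P Q S =>
    Prod.ext (symmetricPairBracket_jacobi_fst (momentMap_swap hskew) hequiv P Q S)
      (symmetricPairBracket_jacobi_snd hcyclic P Q S), ?_, ?_⟩ <;> simp [symmetricPairBracket]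

/-- Converse direction of the correspondence between gapped 2d QCD theories and
symmetric spaces: given a representation of a Lie algebra `g` (with totally
antisymmetric structure constants `f`) by skew-symmetric matrices `t^a`
satisfying the Bianchi identity, the bilinear bracket on `ĝ = g ⊕ ℝⁿ` defined by
`[(x,0),(y,0)] = ([x,y],0)`, `[(x_a,0),(0,u)] = (0,t^a u)`,
`[(0,u),(0,v)] = (Σ_a (uᵀ t^a v)·x_a, 0)` is antisymmetric and satisfies the
Jacobi identity, making `ĝ` a Lie algebra containing `g` with `[p,p] ⊆ g`. -/
theorem bianchi_identity_gives_symmetric_pair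
    (g : Type*) [LieRing g] [LieAlgebra ℝ g]
    (D n : ℕ) (b : Module.Basis (Fin D) ℝ g)
    (f : Fin D → Fin D → Fin D → ℝ)
    (hf1 : ∀ a c e, f a c e = -f c a e)
    (hf2 : ∀ a c e, f a c e = -f a e c)
    (hstruct : ∀ a c, ⁅b a, b c⁆ = ∑ e, f a c e • b e)
    (t : Fin D → Matrix (Fin n) (Fin n) ℝ)
    (hskew : ∀ a, (t a)ᵀ = -t a)
    (hrep : ∀ a c, t a * t c - t c * t a = ∑ e, f a c e • t e)
    (hbianchi : ∀ i j k l, ∑ a,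
        (t a i j * t a k l + t a i k * t a l j + t a i l * t a j k) = 0) :
    let br : (g × (Fin n → ℝ)) → (g × (Fin n → ℝ)) → (g × (Fin n → ℝ)) :=
      fun P Q =>
        (⁅P.1, Q.1⁆ + ∑ a, (P.2 ⬝ᵥ (t a).mulVec Q.2) • b a,
          (∑ a, b.repr P.1 a • t a).mulVec Q.2 - (∑ a, b.repr Q.1 a • t a).mulVec P.2)
    (∀ P Q, br P Q = -br Q P) ∧
    (∀ P Q R, br P (br Q R) + br Q (br R P) + br R (br P Q) = 0) ∧
    (∀ y z : g, br (y, 0) (z, 0) = (⁅y, z⁆, 0)) ∧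
    (∀ u v : Fin n → ℝ, (br (0, u) (0, v)).2 = 0) :=
  bianchi_identity_gives_symmetric_pair_general g D n b f hf2 hstruct t hskew hrep hbianchi
end
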